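/- arXiv:0905.1520 — 2 statements merged into one kernel-verified Lean document; each statement's English description precedes it below -/
import Mathlib

section
/- Let X be a compactum. Then X is an approximative absolute retract (AAR) if and only if for every surjective unital *-homomorphism π : B → C between separable unital commutative C*-algebras and every unital *-homomorphism φ : C(X, ℂ) → C, there is a sequence of unital *-homomorphisms φₙ : C(X, ℂ) → B such that ‖π(φₙ(h)) − φ(h)‖ → 0 for every h ∈ C(X, ℂ). -/
open Filter Topology Set TopologicalSpace

/-- `F n` converges uniformly to `f` with respect to every metric on `X`
compatible with its topology. (On a compactum all compatible metrics are
uniformly equivalent, so this is the usual notion of uniform convergence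
"with respect to any compatible metric".) -/
def TendstoUniformlyCompat {Z X : Type*} [tX : TopologicalSpace X]
    (F : ℕ → Z → X) (f : Z → X) : Prop :=
  ∀ m : MetricSpace X, m.toUniformSpace.toTopologicalSpace = tX →
    @TendstoUniformly Z X ℕ m.toUniformSpace F f atTop

/-- A (compact metrizable) space `X` is an approximative absolute retract:
for every compactum `Y` and every topological embedding `ι : X → Y` with closed
image there is a sequence of continuous maps `rₙ : Y → X` with `rₙ ∘ ι`
converging uniformly to the identity of `X`. -/
def IsAAR (X : Type*) [TopologicalSpace X] : Prop :=
  ∀ (Y : Type*) [TopologicalSpace Y] [CompactSpace Y] [MetrizableSpace Y]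
    (ι : X → Y), Topology.IsEmbedding ι → IsClosed (Set.range ι) →
    ∃ r : ℕ → Y → X, (∀ n, Continuous (r n)) ∧
      TendstoUniformlyCompat (fun n x => r n (ι x)) id

/-- A pointed (compact metrizable) space `(X, x₀)` is a pointed approximative
absolute retract: for every compactum `Y` and every topological embedding
`ι : X → Y` with closed image there is a sequence of continuous maps
`rₙ : Y → X` fixing the base point (`rₙ (ι x₀) = x₀`) with `rₙ ∘ ι`
converging uniformly to the identity of `X`. -/
def IsPointedAAR (X : Type*) [TopologicalSpace X] (x₀ : X) : Prop :=
  ∀ (Y : Type*) [TopologicalSpace Y] [CompactSpace Y] [MetrizableSpace Y]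
    (ι : X → Y), Topology.IsEmbedding ι → IsClosed (Set.range ι) →
    ∃ r : ℕ → Y → X, (∀ n, Continuous (r n)) ∧ (∀ n, r n (ι x₀) = x₀) ∧
      TendstoUniformlyCompat (fun n x => r n (ι x)) id

/-!
By Gelfand duality a unital ⋆-homomorphism `C(X, ℂ) → A` is the same as a continuous map
`Spec A → X` (`StarAlgHom.dualMap`), a surjection `B → C` dualizes to a closed embedding
`Spec C → Spec B`, and `ψₙ h → φ h` for every `h` says exactly that the dual maps converge
uniformly. The lifting property thus asks that maps into `X` defined on a closed subset of a
compactum extend approximately to the whole space. For an AAR, embed `X` in the Hilbert cube,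
extend into the cube by Tietze and follow with the approximate retractions. Conversely,
approximate extensions of the identity of `X ⊆ [0,1]^ℕ` to the cube are approximate retractions,
and the cube suffices because every compactum embeds in it.
-/

open WeakDual WeakDual.CharacterSpace

universe u v w w'

instance ULift.instMetrizableSpace {X : Type u} [TopologicalSpace X] [MetrizableSpace X] :
    MetrizableSpace (ULift.{v} X) :=
  Homeomorph.ulift.isEmbedding.metrizableSpace

instance ULift.instSecondCountableTopology {X : Type u} [TopologicalSpace X]
    [SecondCountableTopology X] : SecondCountableTopology (ULift.{v} X) :=
  Homeomorph.ulift.isInducing.secondCountableTopology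

abbrev HilbertCube : Type := ℕ → unitInterval

theorem exists_isClosedEmbedding_hilbertCube (X : Type u) [TopologicalSpace X] [CompactSpace X]
    [MetrizableSpace X] : ∃ e : X → HilbertCube, IsClosedEmbedding e := by
  rcases isEmpty_or_nonempty X with hX | hX
  · exact ⟨fun _ _ => 0, continuous_const.isClosedEmbedding fun x _ _ => isEmptyElim x⟩
  let := metrizableSpaceMetric X
  obtain ⟨u, hu⟩ := exists_dense_seq X
  let d : X → X → unitInterval := fun x y => projIcc 0 1 zero_le_one (dist x y)
  have hd : ∀ x, Continuous (d x) := fun x => by fun_prop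
  refine ⟨fun x n => d x (u n), (continuous_pi fun n => by fun_prop).isClosedEmbedding
    fun x y hxy => ?_⟩
  have hdxy : d x = d y := hu.equalizer (hd x) (hd y) (funext (congrFun hxy))
  have hyx : min 1 (dist y x) = 0 := by
    simpa [d, coe_projIcc, eq_comm] using congrArg Subtype.val (congrFun hdxy x)
  exact (dist_le_zero.mp ((min_le_iff.mp hyx.le).resolve_left zero_lt_one.not_ge)).symm

theorem tendstoUniformly_of_forall_tendstoUniformly_comp {ι Z X : Type*} [PseudoMetricSpace X]
    [CompactSpace X] {F : ι → Z → X} {f : Z → X} {l : Filter ι}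
    (hF : ∀ h : C(X, ℂ), TendstoUniformly (fun n z => h (F n z)) (fun z => h (f z)) l) :
    TendstoUniformly F f l := by
  rw [Metric.tendstoUniformly_iff]
  intro ε hε
  obtain ⟨s, -, hs, hcover⟩ :=
    finite_cover_balls_of_compact (isCompact_univ (X := X)) (by positivity : 0 < ε / 3)
  -- the distances to the points of a finite `ε / 3`-net are among the test functions
  have hdist : ∀ᶠ n in l, ∀ c ∈ s, ∀ z, |dist (f z) c - dist (F n z) c| < ε / 3 := by
    rw [eventually_all_finite hs]
    intro c _
    filter_upwards [Metric.tendstoUniformly_iff.mp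
      (hF ⟨fun x => (dist x c : ℂ), by fun_prop⟩) (ε / 3) (by positivity)] with n hn z
    simpa [Complex.dist_eq, ← Complex.ofReal_sub] using hn z
  filter_upwards [hdist] with n hn z
  obtain ⟨c, hc, hzc⟩ := mem_iUnion₂.mp (hcover (mem_univ (f z)))
  have := abs_lt.mp (hn c hc z)
  calc dist (f z) (F n z) ≤ dist (f z) c + dist (F n z) c := dist_triangle_right _ _ _
    _ < ε := by linarith [Metric.mem_ball.mp hzc]

theorem tendstoUniformlyCompat_iff {Z X : Type*} [TopologicalSpace X] [CompactSpace X]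
    [MetrizableSpace X] {F : ℕ → Z → X} {f : Z → X} :
    TendstoUniformlyCompat F f ↔
      ∀ h : C(X, ℂ), TendstoUniformly (fun n z => h (F n z)) (fun z => h (f z)) atTop := by
  refine ⟨fun hF h => ?_, fun hF => ?_⟩
  · let := metrizableSpaceMetric X
    exact (CompactSpace.uniformContinuous_of_continuous h.continuous).comp_tendstoUniformly
      (hF _ rfl)
  · rintro m rfl
    exact tendstoUniformly_of_forall_tendstoUniformly_comp hF

theorem WeakDual.CharacterSpace.isClosedEmbedding_compContinuousMap {𝕜 A B : Type*}
    [NontriviallyNormedField 𝕜] [ProperSpace 𝕜]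
    [NormedRing A] [NormedAlgebra 𝕜 A] [CompleteSpace A] [StarRing A]
    [NormedRing B] [NormedAlgebra 𝕜 B] [CompleteSpace B] [StarRing B]
    {π : A →⋆ₐ[𝕜] B} (hπ : Function.Surjective π) : IsClosedEmbedding (compContinuousMap π) :=
  (map_continuous _).isClosedEmbedding fun χ₁ χ₂ h => by
    ext b
    obtain ⟨a, rfl⟩ := hπ b
    exact congr($h a)

namespace StarAlgHom

variable {X A : Type*} [TopologicalSpace X] [CompactSpace X] [T2Space X] [CommCStarAlgebra A]

noncomputable def dualMap (ψ : C(X, ℂ) →⋆ₐ[ℂ] A) : C(characterSpace ℂ A, X) :=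
  ((homeoEval X ℂ).symm : C(_, X)).comp (compContinuousMap ψ)

theorem apply_dualMap (ψ : C(X, ℂ) →⋆ₐ[ℂ] A) (h : C(X, ℂ)) (χ : characterSpace ℂ A) :
    h (ψ.dualMap χ) = χ (ψ h) := by
  change homeoEval X ℂ ((homeoEval X ℂ).symm (compContinuousMap ψ χ)) h = _
  rw [Homeomorph.apply_symm_apply]
  rfl

theorem apply_dualMap_homeoEval {L : Type*} [TopologicalSpace L] [CompactSpace L] [T2Space L]
    (ψ : C(X, ℂ) →⋆ₐ[ℂ] C(L, ℂ)) (h : C(X, ℂ)) (y : L) :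
    h (ψ.dualMap (homeoEval L ℂ y)) = ψ h y :=
  apply_dualMap ψ h _

theorem gelfandTransform_apply_eq_comp_dualMap (ψ : C(X, ℂ) →⋆ₐ[ℂ] A) (h : C(X, ℂ)) :
    gelfandTransform ℂ A (ψ h) = h.comp ψ.dualMap := by
  ext χ
  exact (apply_dualMap ψ h χ).symm

theorem dualMap_comp {B : Type*} [CommCStarAlgebra B] (π : A →⋆ₐ[ℂ] B)
    (ψ : C(X, ℂ) →⋆ₐ[ℂ] A) : (π.comp ψ).dualMap = ψ.dualMap.comp (compContinuousMap π) := by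
  rw [dualMap, compContinuousMap_comp]
  rfl

theorem dualMap_surjective :
    Function.Surjective (dualMap : (C(X, ℂ) →⋆ₐ[ℂ] A) → C(characterSpace ℂ A, X)) := by
  intro g
  refine ⟨((gelfandStarTransform A).symm : _ →⋆ₐ[ℂ] A).comp (g.compStarAlgHom' ℂ ℂ), ?_⟩
  ext χ
  apply (homeoEval X ℂ).injective
  ext h
  change h (dualMap _ χ) = h (g χ)
  rw [apply_dualMap]
  exact congr($((gelfandStarTransform A).apply_symm_apply (h.comp g)) χ)

theorem tendsto_apply_iff_tendstoUniformly {ι : Type*} {l : Filter ι}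
    (ψ : ι → C(X, ℂ) →⋆ₐ[ℂ] A) (φ : C(X, ℂ) →⋆ₐ[ℂ] A) (h : C(X, ℂ)) :
    Tendsto (fun n => ψ n h) l (𝓝 (φ h)) ↔
      TendstoUniformly (fun n χ => h ((ψ n).dualMap χ)) (fun χ => h (φ.dualMap χ)) l := by
  rw [(gelfandTransform_isometry A).isEmbedding.tendsto_nhds_iff, Function.comp_def]
  simp only [gelfandTransform_apply_eq_comp_dualMap]
  rw [ContinuousMap.tendsto_iff_tendstoUniformly]
  rfl

end StarAlgHom

def ApproxLiftingProperty (X : Type u) [TopologicalSpace X] : Prop :=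
  ∀ (B : Type v) (C : Type w) [CommCStarAlgebra B] [CommCStarAlgebra C]
    [SeparableSpace B] [SeparableSpace C] (π : B →⋆ₐ[ℂ] C), Function.Surjective π →
    ∀ φ : C(X, ℂ) →⋆ₐ[ℂ] C, ∃ φₙ : ℕ → (C(X, ℂ) →⋆ₐ[ℂ] B),
      ∀ h : C(X, ℂ), Tendsto (fun n => ‖π (φₙ n h) - φ h‖) atTop (𝓝 0)

theorem isAAR_of_hilbertCube {X : Type u} [TopologicalSpace X]
    (hX : ∀ e : X → HilbertCube, IsClosedEmbedding e →
      ∃ r : ℕ → HilbertCube → X, (∀ n, Continuous (r n)) ∧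
        TendstoUniformlyCompat (fun n x => r n (e x)) id) :
    IsAAR.{u, v} X := by
  intro Y _ _ _ ι hι hιc
  obtain ⟨eY, heY⟩ := exists_isClosedEmbedding_hilbertCube Y
  obtain ⟨r, hr, hconv⟩ := hX (eY ∘ ι) (heY.comp ⟨hι, hιc⟩)
  exact ⟨fun n => r n ∘ eY, fun n => (hr n).comp heY.continuous, hconv⟩

section

variable {X : Type u} [TopologicalSpace X] [CompactSpace X] [MetrizableSpace X]

theorem IsAAR.exists_tendstoUniformlyCompat_extension (hX : IsAAR.{u, v} X) {Z W : Type*}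
    [TopologicalSpace Z] [TopologicalSpace W] [NormalSpace W] {p : Z → W}
    (hp : IsClosedEmbedding p) (f : C(Z, X)) :
    ∃ g : ℕ → C(W, X), TendstoUniformlyCompat (fun n z => g n (p z)) f := by
  obtain ⟨e, he⟩ := exists_isClosedEmbedding_hilbertCube X
  obtain ⟨G, hG⟩ := ((⟨e, he.continuous⟩ : C(X, HilbertCube)).comp f).exists_extension hp
  have he' : IsClosedEmbedding fun x => ULift.up.{v} (e x) :=
    Homeomorph.ulift.symm.isClosedEmbedding.comp he
  obtain ⟨r, hr, hconv⟩ := hX (ULift.{v} HilbertCube) _ he'.isEmbedding he'.isClosed_range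
  refine ⟨fun n => ⟨fun w => r n (ULift.up (G w)), by fun_prop⟩, fun m hm => ?_⟩
  have hGp : ∀ z, G (p z) = e (f z) := fun z => congr($hG z)
  simpa [hGp, Function.comp_def] using (hconv m hm).comp f

theorem IsAAR.approxLiftingProperty (hX : IsAAR.{u, v} X) :
    ApproxLiftingProperty.{u, w, w'} X := by
  intro B C _ _ _ _ π hπ φ
  obtain ⟨g, hg⟩ :=
    hX.exists_tendstoUniformlyCompat_extension (isClosedEmbedding_compContinuousMap hπ) φ.dualMap
  choose φₙ hφₙ using fun n => StarAlgHom.dualMap_surjective (g n)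
  refine ⟨φₙ, fun h => tendsto_iff_norm_sub_tendsto_zero.mp ?_⟩
  refine (StarAlgHom.tendsto_apply_iff_tendstoUniformly (fun n => π.comp (φₙ n)) φ h).mpr ?_
  simpa [StarAlgHom.dualMap_comp, hφₙ] using tendstoUniformlyCompat_iff.mp hg h

theorem ApproxLiftingProperty.exists_approx_retraction (hX : ApproxLiftingProperty.{u, v, w} X)
    {e : X → HilbertCube} (he : IsClosedEmbedding e) :
    ∃ r : ℕ → HilbertCube → X, (∀ n, Continuous (r n)) ∧
      TendstoUniformlyCompat (fun n x => r n (e x)) id := by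
  -- `X` need not live in the universe of `C`, but its copy `range e` in the cube lifts there.
  have : CompactSpace (range e) := isCompact_iff_compactSpace.mp he.isClosed_range.isCompact
  let j : C(ULift.{w} (range e), ULift.{v} HilbertCube) :=
    ⟨fun k => ULift.up k.down.1, by fun_prop⟩
  have hj : IsClosedEmbedding j := j.continuous.isClosedEmbedding <|
    ULift.up_injective.comp (Subtype.val_injective.comp ULift.down_injective)
  let θ : ULift.{w} (range e) ≃ₜ X := Homeomorph.ulift.trans he.isEmbedding.toHomeomorph.symm
  have hπ : Function.Surjective (j.compStarAlgHom' ℂ ℂ) := fun h => h.exists_extension hj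
  obtain ⟨φₙ, hφₙ⟩ := hX _ _ _ hπ ((θ : C(_, X)).compStarAlgHom' ℂ ℂ)
  refine ⟨fun n q => (φₙ n).dualMap (homeoEval _ ℂ (ULift.up q)), fun n => by fun_prop,
    tendstoUniformlyCompat_iff.mpr fun h => ?_⟩
  have hconv := (ContinuousMap.tendsto_iff_tendstoUniformly.mp
    (tendsto_iff_norm_sub_tendsto_zero.mpr (hφₙ h))).comp θ.symm
  have hjθ : ∀ x, j (θ.symm x) = ULift.up (e x) := fun _ => rfl
  simpa [StarAlgHom.apply_dualMap_homeoEval, Function.comp_def, hjθ] using hconv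

end

theorem statement1 (X : Type*) [TopologicalSpace X] [CompactSpace X] [MetrizableSpace X] :
    IsAAR X ↔
      ∀ (B C : Type*) [CommCStarAlgebra B] [CommCStarAlgebra C]
        [SeparableSpace B] [SeparableSpace C]
        (π : B →⋆ₐ[ℂ] C), Function.Surjective π →
        ∀ φ : C(X, ℂ) →⋆ₐ[ℂ] C,
          ∃ φₙ : ℕ → (C(X, ℂ) →⋆ₐ[ℂ] B),
            ∀ h : C(X, ℂ), Tendsto (fun n => ‖π (φₙ n h) - φ h‖) atTop (𝓝 0) :=
  ⟨IsAAR.approxLiftingProperty, fun hX =>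
    isAAR_of_hilbertCube fun _ he => ApproxLiftingProperty.exists_approx_retraction hX he⟩
end

section
/- Let T ⊆ ℝ² be the topologist's sine curve, namely the closure in ℝ² of the set {(t, sin(1/t)) : 0 < t ≤ 1}, equipped with the subspace topology. Then T is an approximative absolute retract but T is not an absolute retract. -/
open Filter Topology Set TopologicalSpace

/-- A (compact metrizable) space `X` is an absolute retract: for every
compactum `Y` and every topological embedding `ι : X → Y` with closed image
there is a continuous map `r : Y → X` with `r ∘ ι` the identity of `X`. -/
def IsAR (X : Type*) [TopologicalSpace X] : Prop :=
  ∀ (Y : Type*) [TopologicalSpace Y] [CompactSpace Y] [MetrizableSpace Y]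
    (ι : X → Y), Topology.IsEmbedding ι → IsClosed (Set.range ι) →
    ∃ r : Y → X, Continuous r ∧ ∀ x, r (ι x) = x

/-- The topologist's sine curve: the closure in `ℝ²` of
`{(t, sin (1/t)) : 0 < t ≤ 1}`. -/
def sineCurve : Set (ℝ × ℝ) :=
  closure {p : ℝ × ℝ | ∃ t : ℝ, 0 < t ∧ t ≤ 1 ∧ p = (t, Real.sin (1 / t))}

/-!
For each `n` there is a continuous map `ρₙ` from the plane onto the sine curve that moves points
of the curve by at most `(2πn + π/2)⁻¹`: it fixes the curve right of `x = (2πn + 3π/2)⁻¹` and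
pushes the rest, including the limit segment `{0} × [-1, 1]`, horizontally onto the arc of the graph between
`x = (2πn + 3π/2)⁻¹` and `x = (2πn + π/2)⁻¹`, on which `sin (1/x)` runs once through `[-1, 1]`.
Composing `ρₙ` with a Tietze extension of the inverse of an embedding gives approximate retractions.

A retraction onto the sine curve from the path-connected square `[0, 1] × [-1, 1]` would make the
curve path connected. It is not: after a path last leaves the segment `{0} × [-1, 1]` it runs along
the graph, and in every short time interval it passes all the oscillations of `sin (1/x)`, so its
height cannot be continuous at that instant.
-/

open Real

universe u v

theorem tendstoUniformlyCompat_of_tendstoUniformly {Z X : Type*} [m₀ : MetricSpace X]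
    [CompactSpace X] {F : ℕ → Z → X} {f : Z → X} (h : TendstoUniformly F f atTop) :
    TendstoUniformlyCompat F f := by
  intro m hm
  rwa [@unique_uniformity_of_compact X m₀.toUniformSpace.toTopologicalSpace _ _ _ hm rfl]

theorem isAAR_of_tendstoUniformlyOn {E : Type u} [MetricSpace E] [TietzeExtension.{v} E]
    {X : Set E} (hX : IsCompact X) (ρ : ℕ → E → E) (hρ : ∀ n, Continuous (ρ n))
    (hρX : ∀ n p, ρ n p ∈ X) (hlim : TendstoUniformlyOn ρ id atTop X) : IsAAR.{u, v} X := by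
  intro Y _ _ _ ι hι hclosed
  let := metrizableSpaceMetric Y
  have : CompactSpace X := isCompact_iff_compactSpace.mp hX
  let e := hι.toHomeomorph
  obtain ⟨g, hg⟩ := ContinuousMap.exists_restrict_eq hclosed
    ⟨fun y => (e.symm y : E), continuous_subtype_val.comp e.symm.continuous⟩
  have hgι : ∀ x, g (ι x) = x := fun x => by
    rw [show g (ι x) = e.symm (e x) from congr($hg (e x)), e.symm_apply_apply]
  refine ⟨fun n y => ⟨ρ n (g y), hρX n (g y)⟩, fun n => by fun_prop, ?_⟩
  apply tendstoUniformlyCompat_of_tendstoUniformly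
  simp only [hgι]
  rw [tendstoUniformlyOn_iff_tendstoUniformly_comp_coe] at hlim
  exact Metric.tendstoUniformly_iff.2 fun ε hε => Metric.tendstoUniformly_iff.1 hlim ε hε

theorem IsAR.pathConnectedSpace {X : Type u} [TopologicalSpace X] {Y : Type v} [TopologicalSpace Y]
    [CompactSpace Y] [MetrizableSpace Y] [PathConnectedSpace Y] (hX : IsAR.{u, v} X) {ι : X → Y}
    (hι : IsClosedEmbedding ι) : PathConnectedSpace X := by
  obtain ⟨r, hr, hrι⟩ := hX Y ι hι.isEmbedding hι.isClosed_range
  exact (Function.LeftInverse.surjective hrι).pathConnectedSpace hr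

theorem sineCurve_subset_Icc_prod_Icc : sineCurve ⊆ Icc 0 1 ×ˢ Icc (-1) 1 := by
  refine closure_minimal ?_ (isClosed_Icc.prod isClosed_Icc)
  rintro _ ⟨t, ht0, ht1, rfl⟩
  exact ⟨⟨ht0.le, ht1⟩, neg_one_le_sin _, sin_le_one _⟩

theorem isCompact_sineCurve : IsCompact sineCurve :=
  (isCompact_Icc.prod isCompact_Icc).of_isClosed_subset isClosed_closure
    sineCurve_subset_Icc_prod_Icc

theorem inv_sin_mem_sineCurve {θ : ℝ} (hθ : 1 ≤ θ) : (θ⁻¹, sin θ) ∈ sineCurve :=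
  subset_closure ⟨θ⁻¹, by positivity, inv_le_one_of_one_le₀ hθ, by rw [one_div, inv_inv]⟩

theorem snd_eq_sin_inv_of_mem_sineCurve {p : ℝ × ℝ} (hp : p ∈ sineCurve) (hp₀ : 0 < p.1) :
    p.2 = sin p.1⁻¹ := by
  set ε := p.1 / 2
  have hε : 0 < ε := by positivity
  let γ : ℝ → ℝ × ℝ := fun t => (t, sin t⁻¹)
  have hγ : ContinuousOn γ (Icc ε 1) :=
    continuousOn_id.prodMk (continuous_sin.comp_continuousOn
      (continuousOn_inv₀.mono fun t ht => (hε.trans_le ht.1).ne'))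
  have hsplit : sineCurve ⊆ γ '' Icc ε 1 ∪ {q | q.1 ≤ ε} := by
    refine closure_minimal ?_
      ((isCompact_Icc.image_of_continuousOn hγ).isClosed.union
        (isClosed_le continuous_fst continuous_const))
    rintro _ ⟨t, ht0, ht1, rfl⟩
    rcases le_or_gt ε t with hεt | htε
    · exact Or.inl ⟨t, ⟨hεt, ht1⟩, by simp [γ]⟩
    · exact Or.inr htε.le
  rcases hsplit hp with ⟨t, -, rfl⟩ | hle
  · rfl
  · have : p.1 ≤ p.1 / 2 := hle
    linarith

noncomputable def branchAngle (n : ℕ) (y : ℝ) : ℝ := 2 * π * n + π - arcsin y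

theorem branchAngle_mem_Icc (n : ℕ) (y : ℝ) :
    branchAngle n y ∈ Icc (2 * π * n + π / 2) (2 * π * n + 3 * π / 2) := by
  rw [branchAngle, mem_Icc]
  constructor <;> linarith [arcsin_le_pi_div_two y, neg_pi_div_two_le_arcsin y]

theorem sin_branchAngle (n : ℕ) {y : ℝ} (hy : y ∈ Icc (-1) 1) : sin (branchAngle n y) = y := by
  rw [show branchAngle n y = π - arcsin y + n * (2 * π) by rw [branchAngle]; ring,
    sin_add_nat_mul_two_pi, sin_pi_sub, sin_arcsin hy.1 hy.2]

theorem branchAngle_sin {n : ℕ} {θ : ℝ}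
    (hθ : θ ∈ Icc (2 * π * n + π / 2) (2 * π * n + 3 * π / 2)) :
    branchAngle n (sin θ) = θ := by
  have hθ' : θ = π - (2 * π * n + π - θ) + n * (2 * π) := by ring
  rw [hθ', sin_add_nat_mul_two_pi, sin_pi_sub, branchAngle,
    arcsin_sin (by linarith [hθ.2]) (by linarith [hθ.1])]
  ring

theorem exists_sin_inv_eq {y ε : ℝ} (hy : y ∈ Icc (-1) 1) (hε : 0 < ε) :
    ∃ t ∈ Ioo 0 ε, sin t⁻¹ = y := by
  obtain ⟨n, hn⟩ := exists_nat_gt ε⁻¹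
  have hθ : ε⁻¹ < branchAngle n y := by
    nlinarith [(branchAngle_mem_Icc n y).1, pi_gt_three, (n.cast_nonneg : (0 : ℝ) ≤ n)]
  have hθ₀ : 0 < branchAngle n y := (inv_pos.2 hε).trans hθ
  exact ⟨(branchAngle n y)⁻¹, ⟨inv_pos.2 hθ₀, inv_lt_of_inv_lt₀ hε hθ⟩,
    by rw [inv_inv, sin_branchAngle n hy]⟩

theorem zero_mem_sineCurve {y : ℝ} (hy : y ∈ Icc (-1) 1) : ((0 : ℝ), y) ∈ sineCurve := by
  refine Metric.mem_closure_iff.2 fun ε hε => ?_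
  obtain ⟨t, ⟨ht0, htε⟩, hty⟩ := exists_sin_inv_eq hy (lt_min hε one_pos)
  refine ⟨(t, y), ⟨t, ht0, (htε.trans_le (min_le_right _ _)).le, by rw [one_div, hty]⟩, ?_⟩
  simpa [Prod.dist_eq, abs_of_pos ht0, hε] using htε.trans_le (min_le_left _ _)

/-- The angle `1/x`, clamped to `[1, 2πn + 3π/2]`, against the angle in `[2πn + π/2, 2πn + 3π/2]`
with sine `y`. On the sine curve the minimum is `1/x` right of `x = (2πn + 3π/2)⁻¹` (on the graph
the two agree as long as `1/x ≥ 2πn + π/2`) and the branch angle left of it. -/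
noncomputable def retractAngle (n : ℕ) (p : ℝ × ℝ) : ℝ :=
  min (max (2 * π * n + 3 * π / 2)⁻¹ (min 1 p.1))⁻¹ (branchAngle n p.2)

noncomputable def sineRetraction (n : ℕ) (p : ℝ × ℝ) : ℝ × ℝ :=
  ((retractAngle n p)⁻¹, sin (retractAngle n p))

theorem inv_two_pi_mul_add_three_pi_div_two_mem_Ioc (n : ℕ) :
    (2 * π * n + 3 * π / 2)⁻¹ ∈ Ioc (0 : ℝ) 1 := by
  have : 1 ≤ 2 * π * n + 3 * π / 2 := by
    nlinarith [pi_gt_three, (n.cast_nonneg : (0 : ℝ) ≤ n)]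
  exact ⟨by positivity, inv_le_one_of_one_le₀ this⟩

theorem one_le_retractAngle (n : ℕ) (p : ℝ × ℝ) : 1 ≤ retractAngle n p := by
  obtain ⟨ha₀, ha₁⟩ := inv_two_pi_mul_add_three_pi_div_two_mem_Ioc n
  refine le_min ((one_le_inv₀ (ha₀.trans_le (le_max_left _ _))).2
    (max_le ha₁ (min_le_left _ _))) ?_
  nlinarith [(branchAngle_mem_Icc n p.2).1, pi_gt_three, (n.cast_nonneg : (0 : ℝ) ≤ n)]

theorem continuous_sineRetraction (n : ℕ) : Continuous (sineRetraction n) := by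
  have hmax : ∀ p : ℝ × ℝ, max (2 * π * n + 3 * π / 2)⁻¹ (min 1 p.1) ≠ 0 := fun p =>
    ((inv_two_pi_mul_add_three_pi_div_two_mem_Ioc n).1.trans_le (le_max_left _ _)).ne'
  have hθ : Continuous (retractAngle n) :=
    ((by fun_prop : Continuous fun p : ℝ × ℝ => max _ (min 1 p.1)).inv₀ hmax).min
      (continuous_const.sub (continuous_arcsin.comp continuous_snd))
  exact (hθ.inv₀ fun p => (one_pos.trans_le (one_le_retractAngle n p)).ne').prodMk
    (continuous_sin.comp hθ)

theorem sineRetraction_mem_sineCurve (n : ℕ) (p : ℝ × ℝ) : sineRetraction n p ∈ sineCurve :=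
  inv_sin_mem_sineCurve (one_le_retractAngle n p)

theorem retractAngle_of_fst_le {n : ℕ} {p : ℝ × ℝ} (hx : p.1 ≤ (2 * π * n + 3 * π / 2)⁻¹) :
    retractAngle n p = branchAngle n p.2 := by
  rw [retractAngle, max_eq_left ((min_le_right _ _).trans hx), inv_inv,
    min_eq_right (branchAngle_mem_Icc n p.2).2]

theorem sineRetraction_of_le_fst {n : ℕ} {p : ℝ × ℝ} (hp : p ∈ sineCurve)
    (hx : (2 * π * n + 3 * π / 2)⁻¹ ≤ p.1) : sineRetraction n p = p := by
  have hx₀ : 0 < p.1 := (inv_two_pi_mul_add_three_pi_div_two_mem_Ioc n).1.trans_le hx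
  have hy : p.2 = sin p.1⁻¹ := snd_eq_sin_inv_of_mem_sineCurve hp hx₀
  have hθ : retractAngle n p = p.1⁻¹ := by
    rw [retractAngle, min_eq_right (sineCurve_subset_Icc_prod_Icc hp).1.2, max_eq_right hx]
    rcases le_or_gt (2 * π * n + π / 2) p.1⁻¹ with hle | hlt
    · have hle' : p.1⁻¹ ≤ 2 * π * n + 3 * π / 2 := (inv_le_comm₀ hx₀ (by positivity)).2 hx
      rw [hy, branchAngle_sin ⟨hle, hle'⟩, min_self]
    · exact min_eq_left (hlt.le.trans (branchAngle_mem_Icc n p.2).1)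
  rw [sineRetraction, hθ, inv_inv, ← hy]

theorem dist_sineRetraction_le {n : ℕ} {p : ℝ × ℝ} (hp : p ∈ sineCurve) :
    dist (sineRetraction n p) p ≤ (2 * π * n + π / 2)⁻¹ := by
  rcases le_or_gt p.1 (2 * π * n + 3 * π / 2)⁻¹ with hx | hx
  · obtain ⟨⟨hx₀, -⟩, hy⟩ := sineCurve_subset_Icc_prod_Icc hp
    obtain ⟨hθ₁, hθ₂⟩ := branchAngle_mem_Icc n p.2
    have hθ₀ : 0 < 2 * π * n + π / 2 := by positivity
    have h₁ : (branchAngle n p.2)⁻¹ ≤ (2 * π * n + π / 2)⁻¹ := inv_anti₀ hθ₀ hθ₁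
    have h₂ : (2 * π * n + 3 * π / 2)⁻¹ ≤ (branchAngle n p.2)⁻¹ :=
      inv_anti₀ (hθ₀.trans_le hθ₁) hθ₂
    rw [sineRetraction, retractAngle_of_fst_le hx, sin_branchAngle n hy, Prod.dist_eq, dist_self,
      Real.dist_eq, abs_of_nonneg (by linarith)]
    exact max_le (by linarith) (by positivity)
  · rw [sineRetraction_of_le_fst hp hx.le, dist_self]
    positivity

theorem tendstoUniformlyOn_sineRetraction :
    TendstoUniformlyOn sineRetraction id atTop sineCurve := by
  have hlim : Tendsto (fun n : ℕ => (2 * π * n + π / 2)⁻¹) atTop (𝓝 0) :=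
    tendsto_inv_atTop_zero.comp <| tendsto_atTop_mono
      (fun n => by nlinarith [pi_gt_three, (n.cast_nonneg : (0 : ℝ) ≤ n)])
      tendsto_natCast_atTop_atTop
  rw [Metric.tendstoUniformlyOn_iff]
  intro ε hε
  filter_upwards [hlim.eventually (gt_mem_nhds hε)] with n hn p hp
  rw [dist_comm]
  exact (dist_sineRetraction_le hp).trans_lt hn

theorem isAAR_sineCurve : IsAAR sineCurve :=
  isAAR_of_tendstoUniformlyOn isCompact_sineCurve sineRetraction continuous_sineRetraction
    sineRetraction_mem_sineCurve tendstoUniformlyOn_sineRetraction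

theorem surjOn_snd_of_fst_eq_zero {f : ℝ → ℝ × ℝ} {a b : ℝ} (hab : a ≤ b)
    (hf : ContinuousOn f (Icc a b)) (hfS : ∀ s ∈ Icc a b, f s ∈ sineCurve) (ha : (f a).1 = 0)
    (hb : 0 < (f b).1) : SurjOn (fun s => (f s).2) (Icc a b) (Icc (-1) 1) := by
  intro y hy
  obtain ⟨t, ⟨ht₀, htb⟩, hty⟩ := exists_sin_inv_eq hy hb
  obtain ⟨s, hs, hst⟩ := intermediate_value_Icc hab (continuous_fst.comp_continuousOn hf)
    ⟨show (f a).1 ≤ t by rw [ha]; exact ht₀.le, htb.le⟩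
  replace hst : (f s).1 = t := hst
  refine ⟨s, hs, show (f s).2 = y from ?_⟩
  rw [snd_eq_sin_inv_of_mem_sineCurve (hfS s hs) (hst ▸ ht₀), hst, hty]

theorem not_continuousAt_of_forall_surjOn_Icc {g : ℝ → ℝ} {s₀ : ℝ}
    (hg : ∀ c > s₀, SurjOn g (Icc s₀ c) (Icc (-1) 1)) : ¬ ContinuousAt g s₀ := by
  intro hcont
  obtain ⟨δ, hδ, hnear⟩ := Metric.continuousAt_iff.1 hcont 1 one_pos
  have hclose : ∀ s ∈ Icc s₀ (s₀ + δ / 2), |g s - g s₀| < 1 := fun s hs => by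
    refine hnear ?_
    rw [Real.dist_eq, abs_lt]
    constructor <;> linarith [hs.1, hs.2]
  have hsurj := hg (s₀ + δ / 2) (by linarith)
  obtain ⟨s₁, hs₁, h₁⟩ := hsurj (right_mem_Icc.2 (by norm_num : (-1 : ℝ) ≤ 1))
  obtain ⟨s₂, hs₂, h₂⟩ := hsurj (left_mem_Icc.2 (by norm_num : (-1 : ℝ) ≤ 1))
  have h₁' := hclose s₁ hs₁
  have h₂' := hclose s₂ hs₂
  rw [h₁, abs_lt] at h₁'
  rw [h₂, abs_lt] at h₂'
  linarith [h₁'.1, h₂'.2]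

theorem not_joinedIn_sineCurve {p q : ℝ × ℝ} (hp : p.1 = 0) (hq : 0 < q.1) :
    ¬ JoinedIn sineCurve p q := by
  rintro ⟨γ, hγ⟩
  let f := γ.extend
  have hfS : ∀ s ∈ Icc (0 : ℝ) 1, f s ∈ sineCurve := fun s hs => by
    rw [show f s = γ ⟨s, hs⟩ from γ.extend_extends' ⟨s, hs⟩]
    exact hγ _
  let Z := Icc 0 1 ∩ {s | (f s).1 = 0}
  have hZ : IsCompact Z := isCompact_Icc.inter_right (isClosed_eq (by fun_prop) continuous_const)
  have hs₀ : sSup Z ∈ Z := hZ.sSup_mem ⟨0, left_mem_Icc.2 zero_le_one, by simp [f, hp]⟩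
  set s₀ := sSup Z
  have hs₀1 : s₀ < 1 := hs₀.1.2.lt_of_ne fun h => by
    have : (f 1).1 = 0 := h ▸ hs₀.2
    simp [f] at this
    linarith
  have hpos : ∀ s ∈ Ioc s₀ 1, 0 < (f s).1 := fun s hs => by
    have hsI : s ∈ Icc (0 : ℝ) 1 := ⟨hs₀.1.1.trans hs.1.le, hs.2⟩
    refine (sineCurve_subset_Icc_prod_Icc (hfS s hsI)).1.1.lt_of_ne fun h => ?_
    exact (le_csSup hZ.bddAbove ⟨hsI, h.symm⟩).not_gt hs.1
  refine not_continuousAt_of_forall_surjOn_Icc (fun c hc => ?_)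
    ((continuous_snd.comp f.continuous).continuousAt (x := s₀))
  have hc' : min c 1 ∈ Ioc s₀ 1 := ⟨lt_min hc hs₀1, min_le_right _ _⟩
  refine (surjOn_snd_of_fst_eq_zero hc'.1.le f.continuous.continuousOn
    (fun s hs => hfS s ⟨hs₀.1.1.trans hs.1, hs.2.trans hc'.2⟩) hs₀.2 (hpos _ hc')).mono
    (Icc_subset_Icc_right (min_le_left _ _)) subset_rfl

theorem not_isPathConnected_sineCurve : ¬ IsPathConnected sineCurve := fun h =>
  not_joinedIn_sineCurve (p := (0, 0)) (q := (1, sin 1)) rfl one_pos <|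
    h.joinedIn _ (zero_mem_sineCurve ⟨by norm_num, by norm_num⟩) _
      (by simpa using inv_sin_mem_sineCurve le_rfl)

theorem not_isAR_sineCurve : ¬ IsAR.{0, v} sineCurve := by
  intro h
  let K : Set (ℝ × ℝ) := Icc 0 1 ×ˢ Icc (-1) 1
  have : CompactSpace K := isCompact_iff_compactSpace.1 (isCompact_Icc.prod isCompact_Icc)
  have : PathConnectedSpace K := isPathConnected_iff_pathConnectedSpace.1 <|
    ((convex_Icc _ _).prod (convex_Icc _ _)).isPathConnected ⟨(0, 0), by norm_num [K]⟩
  have : PathConnectedSpace (ULift.{v} K) :=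
    ULift.up_surjective.pathConnectedSpace continuous_uliftUp
  have : CompactSpace sineCurve := isCompact_iff_compactSpace.1 isCompact_sineCurve
  have hι : IsClosedEmbedding fun x => ULift.up.{v} (inclusion sineCurve_subset_Icc_prod_Icc x) :=
    (continuous_uliftUp.comp (continuous_inclusion _)).isClosedEmbedding
      (ULift.up_injective.comp (inclusion_injective _))
  exact not_isPathConnected_sineCurve
    (isPathConnected_iff_pathConnectedSpace.2 (h.pathConnectedSpace hι))

theorem statement3 : IsAAR sineCurve ∧ ¬ IsAR sineCurve :=
  ⟨isAAR_sineCurve, not_isAR_sineCurve⟩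
end
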